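/- (Theorem on accuracy, consistency with ε = h^m.) Let f : ℝ → ℝ be infinitely differentiable and x ∈ ℝ (arbitrary number of vanishing derivatives of f at x and at neighboring points is allowed). Let p = 2 and 0 < m ≤ 9/2, and set ε(h) = h^m. For y ∈ ℝ and h > 0 let ωₖ(y,h), k = 0,1,2, be the WENO-UD5 nonlinear weights computed at center y: ωₖ(y,h) = αₖ(y,h)/Σₗαₗ(y,h) with αₖ(y,h) = dₖ(1 + (ζ(y,h)/(βₖ(y,h)+ε(h)))ᵖ), where βₖ(y,h) are the WENO-LOC smoothness indicators and ζ(y,h) the global smoothness indicator centered at y. Then the WENO-UD5 conservative derivative approximation satisfies (1/h)·(Σₖ ωₖ(x,h)·f̂ᵏ(x,h) − Σₖ ωₖ(x−h,h)·f̂ᵏ(x−h,h)) − f′(x) = O(h⁵) as h → 0⁺. -/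

import Mathlib

open Filter Asymptotics Topology

/-- The WENO-LOC smoothness indicators of `f` at center `x` with mesh size `h`. -/
noncomputable def betaLOC (f : ℝ → ℝ) (x h : ℝ) : Fin 3 → ℝ :=
  ![(1/2) * ((f (x - h) - f (x - 2*h))^2 + (f x - f (x - h))^2)
      + (f x - 2 * f (x - h) + f (x - 2*h))^2,
    (1/2) * ((f x - f (x - h))^2 + (f (x + h) - f x)^2)
      + (f (x - h) - 2 * f x + f (x + h))^2,
    (1/2) * ((f (x + h) - f x)^2 + (f (x + 2*h) - f (x + h))^2)
      + (f x - 2 * f (x + h) + f (x + 2*h))^2]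

/-- The global smoothness indicator `ζ` of `f` at center `x` with mesh size `h`. -/
noncomputable def zetaUD (f : ℝ → ℝ) (x h : ℝ) : ℝ :=
  |(f (x - 2*h) - 2 * f (x - h) + f x)^2
    - 2 * (f (x - h) - 2 * f x + f (x + h))^2
    + (f x - 2 * f (x + h) + f (x + 2*h))^2|

/-- The linear (ideal) weights `d₀ = 1/10`, `d₁ = 6/10`, `d₂ = 3/10`. -/
noncomputable def dlin : Fin 3 → ℝ := ![1/10, 6/10, 3/10]

/-- The three candidate flux values at the right interface of the cell centered
at `y` with mesh size `h`. -/
noncomputable def candidateFlux (f : ℝ → ℝ) (y h : ℝ) : Fin 3 → ℝ :=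
  ![(2 * f (y - 2*h) - 7 * f (y - h) + 11 * f y) / 6,
    (-f (y - h) + 5 * f y + 2 * f (y + h)) / 6,
    (2 * f y + 5 * f (y + h) - f (y + 2*h)) / 6]

/-- The WENO-UD5 nonlinear weight (exponent `p = 2`, regularization `ε = h^m`)
computed at center `y` with mesh size `h`. -/
noncomputable def wenoUD5weight (f : ℝ → ℝ) (m y h : ℝ) (k : Fin 3) : ℝ :=
  (dlin k * (1 + (zetaUD f y h / (betaLOC f y h k + h ^ m))^2))
    / (∑ l : Fin 3, dlin l * (1 + (zetaUD f y h / (betaLOC f y h l + h ^ m))^2))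

open Set
open scoped ContDiff



section Taylor

lemma isBigO_pow_succ_of_deriv {g : ℝ → ℝ} (hg : Differentiable ℝ g) (h0 : g 0 = 0) {n : ℕ}
    (hd : (fun h => deriv g h) =O[𝓝 (0:ℝ)] fun h => h ^ n) :
    g =O[𝓝 (0:ℝ)] fun h => h ^ (n+1) := by
  obtain ⟨C, hC0, hCw⟩ := hd.exists_nonneg
  have hC := hCw.bound
  rw [Metric.eventually_nhds_iff] at hC
  obtain ⟨δ, δpos, hδ⟩ := hC
  rw [isBigO_iff]
  refine ⟨C, ?_⟩
  rw [Metric.eventually_nhds_iff]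
  refine ⟨δ, δpos, fun h hh => ?_⟩
  have hball : ∀ t ∈ Icc (-|h|) |h|, ‖deriv g t‖ ≤ C * |h| ^ n := by
    intro t ht
    have habs : |t| ≤ |h| := abs_le.2 ⟨ht.1, ht.2⟩
    have hdt : dist t 0 < δ := by
      rw [Real.dist_eq, sub_zero]
      exact lt_of_le_of_lt habs (by simpa [Real.dist_eq] using hh)
    have h1 : ‖t ^ n‖ ≤ |h| ^ n := by
      rw [Real.norm_eq_abs, abs_pow]
      exact pow_le_pow_left₀ (abs_nonneg t) habs n
    calc ‖deriv g t‖ ≤ C * ‖t ^ n‖ := hδ hdt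
    _ ≤ C * |h| ^ n := by nlinarith
  have hmem0 : (0:ℝ) ∈ Icc (-|h|) |h| := ⟨neg_nonpos.2 (abs_nonneg h), abs_nonneg h⟩
  have hmemh : h ∈ Icc (-|h|) |h| := ⟨neg_abs_le h, le_abs_self h⟩
  have key := Convex.norm_image_sub_le_of_norm_deriv_le
    (fun t _ => hg.differentiableAt) hball (convex_Icc _ _) hmem0 hmemh
  have hgh : ‖g h‖ ≤ C * |h| ^ n * |h| := by
    simpa [h0, Real.norm_eq_abs] using key
  calc ‖g h‖ ≤ C * |h| ^ n * |h| := hgh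
  _ = C * ‖h ^ (n+1)‖ := by
      rw [Real.norm_eq_abs, abs_pow, pow_succ]; ring

lemma taylor_center_isBigO (n : ℕ) : ∀ (f : ℝ → ℝ), ContDiff ℝ ∞ f → ∀ (x : ℝ),
    (fun h : ℝ => f (x + h) - ∑ j ∈ Finset.range n, iteratedDeriv j f x / (j.factorial : ℝ) * h ^ j)
      =O[𝓝 (0:ℝ)] fun h => h ^ n := by
  induction n with
  | zero =>
    intro f hf x
    simp only [Finset.range_zero, Finset.sum_empty, sub_zero, pow_zero]
    have : Tendsto (fun h : ℝ => f (x + h)) (𝓝 0) (𝓝 (f x)) := by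
      have := (hf.continuous.continuousAt (x := x)).tendsto
      exact this.comp (by simpa using (continuous_add_left x).tendsto (0:ℝ))
    exact this.isBigO_one ℝ
  | succ n ih =>
    intro f hf x
    have hf' : ContDiff ℝ ∞ (deriv f) := (contDiff_infty_iff_deriv.mp hf).2
    set g : ℝ → ℝ := fun h =>
      f (x + h) - ∑ j ∈ Finset.range (n+1), iteratedDeriv j f x / (j.factorial : ℝ) * h ^ j with hg
    have hgdiff : Differentiable ℝ g := by
      refine Differentiable.sub ?_ ?_
      · exact (hf.differentiable (by norm_num)).comp ((differentiable_id).const_add x)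
      · exact Differentiable.fun_sum fun j _ => (differentiable_pow j).const_mul _
    have hg0 : g 0 = 0 := by
      simp only [hg, add_zero]
      rw [Finset.sum_range_succ']
      simp [iteratedDeriv_zero]
    have hderiv : ∀ h : ℝ, deriv g h =
        deriv f (x + h) - ∑ j ∈ Finset.range n,
          iteratedDeriv j (deriv f) x / (j.factorial : ℝ) * h ^ j := by
      intro h
      have h1 : HasDerivAt (fun h : ℝ => f (x + h)) (deriv f (x + h)) h := by
        have := ((hf.differentiable (by norm_num)) (x + h)).hasDerivAt
        simpa [Function.comp_def] using this.comp h ((hasDerivAt_id h).const_add x)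
      have h2 : HasDerivAt (fun h : ℝ => ∑ j ∈ Finset.range (n+1),
          iteratedDeriv j f x / (j.factorial : ℝ) * h ^ j)
          (∑ j ∈ Finset.range (n+1),
            iteratedDeriv j f x / (j.factorial : ℝ) * (j * h ^ (j-1))) h := by
        exact HasDerivAt.fun_sum fun j _ => (hasDerivAt_pow j h).const_mul _
      have h3 := (h1.fun_sub h2).deriv
      rw [h3]
      congr 1
      rw [Finset.sum_range_succ']
      simp only [Nat.cast_zero, pow_zero, Nat.zero_sub, mul_zero, zero_mul, add_zero]
      refine Finset.sum_congr rfl fun j _ => ?_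
      rw [iteratedDeriv_succ']
      have hfac1 : ((j+1).factorial : ℝ) = (j+1) * (j.factorial : ℝ) := by
        push_cast [Nat.factorial_succ]; ring
      rw [hfac1]
      have hfac : (j.factorial : ℝ) ≠ 0 := Nat.cast_ne_zero.2 (Nat.factorial_ne_zero j)
      field_simp
      rw [Nat.add_sub_cancel]; push_cast
      ring
    refine isBigO_pow_succ_of_deriv hgdiff hg0 ?_
    have := ih (deriv f) hf' x
    refine this.congr' ?_ (EventuallyEq.refl _ _)
    filter_upwards with h
    rw [hderiv h]

lemma taylor_shift_isBigO (f : ℝ → ℝ) (hf : ContDiff ℝ ∞ f) (x : ℝ) (n : ℕ) (a : ℝ) :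
    (fun h : ℝ => f (x + a * h)
        - ∑ j ∈ Finset.range n, iteratedDeriv j f x / (j.factorial : ℝ) * (a * h) ^ j)
      =O[𝓝 (0:ℝ)] fun h => h ^ n := by
  have base := taylor_center_isBigO n f hf x
  have htend : Tendsto (fun h : ℝ => a * h) (𝓝 0) (𝓝 0) := by
    simpa using (continuous_mul_left a).tendsto (0:ℝ)
  have hcomp := base.comp_tendsto htend
  have this2 : (fun h : ℝ => f (x + a * h)
        - ∑ j ∈ Finset.range n, iteratedDeriv j f x / (j.factorial : ℝ) * (a * h) ^ j)
      =O[𝓝 (0:ℝ)] fun h => (a * h) ^ n := by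
    simpa [Function.comp_def] using hcomp
  refine this2.trans ?_
  have h2 : (fun h : ℝ => (a * h) ^ n) = fun h => a ^ n * h ^ n := by
    funext h; ring
  rw [h2]
  exact (isBigO_refl (fun h : ℝ => h ^ n) _).const_mul_left _

lemma stencil_expand_isBigO (f : ℝ → ℝ) (hf : ContDiff ℝ ∞ f) (x : ℝ) (n K : ℕ)
    (c a : Fin K → ℝ) :
    (fun h : ℝ => (∑ i, c i * f (x + a i * h))
        - ∑ j ∈ Finset.range n, (∑ i, c i * a i ^ j) * (iteratedDeriv j f x / (j.factorial : ℝ)) * h ^ j)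
      =O[𝓝 (0:ℝ)] fun h => h ^ n := by
  have heq : ∀ h : ℝ, (∑ i, c i * f (x + a i * h))
        - ∑ j ∈ Finset.range n, (∑ i, c i * a i ^ j) * (iteratedDeriv j f x / (j.factorial : ℝ)) * h ^ j
      = ∑ i, c i * (f (x + a i * h)
          - ∑ j ∈ Finset.range n, iteratedDeriv j f x / (j.factorial : ℝ) * (a i * h) ^ j) := by
    intro h
    simp only [mul_sub, Finset.sum_sub_distrib]
    congr 1
    simp only [Finset.mul_sum]
    rw [Finset.sum_comm]
    refine Finset.sum_congr rfl fun j _ => ?_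
    rw [Finset.sum_mul, Finset.sum_mul]
    refine Finset.sum_congr rfl fun i _ => ?_
    rw [mul_pow]; ring
  have hsum : (fun h : ℝ => ∑ i, c i * (f (x + a i * h)
          - ∑ j ∈ Finset.range n, iteratedDeriv j f x / (j.factorial : ℝ) * (a i * h) ^ j))
      =O[𝓝 (0:ℝ)] fun h => h ^ n := by
    refine IsBigO.fun_sum fun i _ => ?_
    exact (taylor_shift_isBigO f hf x n (a i)).const_mul_left (c i)
  exact hsum.congr' (by filter_upwards with h using (heq h).symm) (EventuallyEq.refl _ _)

lemma stencil_null_isBigO (f : ℝ → ℝ) (hf : ContDiff ℝ ∞ f) (x : ℝ) (n K : ℕ)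
    (c a : Fin K → ℝ) (hmom : ∀ j, j < n → ∑ i, c i * a i ^ j = 0) :
    (fun h : ℝ => ∑ i, c i * f (x + a i * h)) =O[𝓝 (0:ℝ)] fun h => h ^ n := by
  have hexp := stencil_expand_isBigO f hf x n K c a
  refine hexp.congr' ?_ (EventuallyEq.refl _ _)
  filter_upwards with h
  have hz : ∑ j ∈ Finset.range n,
      (∑ i, c i * a i ^ j) * (iteratedDeriv j f x / (j.factorial:ℝ)) * h ^ j = 0 :=
    Finset.sum_eq_zero fun j hj => by rw [hmom j (Finset.mem_range.1 hj)]; ring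
  rw [hz, sub_zero]

end Taylor


lemma ev_bound {u : ℝ → ℝ} {n : ℕ} (hu : u =O[𝓝 (0:ℝ)] fun h => h ^ n) :
    ∃ C : ℝ, 0 ≤ C ∧ ∀ᶠ h in 𝓝[>] (0:ℝ), |u h| ≤ C * h ^ n := by
  obtain ⟨C, hC0, hCw⟩ := hu.exists_nonneg
  refine ⟨C, hC0, ?_⟩
  have hb := hCw.bound.filter_mono (nhdsWithin_le_nhds (s := Ioi (0:ℝ)))
  filter_upwards [hb, self_mem_nhdsWithin] with h hbh hh
  simpa [Real.norm_eq_abs, abs_pow, abs_of_pos (show (0:ℝ) < h from hh)] using hbh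

lemma pow_chain {h m : ℝ} (h0 : 0 < h) (h1 : h ≤ 1) (hm : m ≤ 9/2) :
    (h ^ (6:ℕ))^2 / (h ^ m)^2 * h ^ (3:ℕ) / h ≤ h ^ (5:ℕ) := by
  have hne : h ≠ 0 := ne_of_gt h0
  have a2 : (h ^ m)^2 = h ^ (2*m) := by
    rw [← Real.rpow_natCast (h ^ m) 2, ← Real.rpow_mul h0.le]
    norm_num [mul_comm]
  have a1 : (h ^ (6:ℕ))^2 * h ^ (3:ℕ) / h = h ^ ((14:ℕ):ℝ) := by
    rw [Real.rpow_natCast]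
    field_simp
  have e1 : (h ^ (6:ℕ))^2 / (h ^ m)^2 * h ^ (3:ℕ) / h = h ^ (((14:ℕ):ℝ) - 2*m) := by
    rw [Real.rpow_sub h0, ← a1, a2]
    ring
  rw [e1, show (h ^ (5:ℕ)) = h ^ ((5:ℕ):ℝ) from (Real.rpow_natCast h 5).symm]
  apply Real.rpow_le_rpow_of_exponent_ge h0 h1
  push_cast
  linarith

lemma wdev (d0 d1 d2 s0 s1 s2 S dk sk : ℝ) (hd0 : 0 ≤ d0) (hd1 : 0 ≤ d1) (hd2 : 0 ≤ d2)
    (hsum : d0 + d1 + d2 = 1) (hs0 : 0 ≤ s0) (hs1 : 0 ≤ s1) (hs2 : 0 ≤ s2)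
    (hS0 : s0 ≤ S) (hS1 : s1 ≤ S) (hS2 : s2 ≤ S)
    (hdk : 0 ≤ dk) (hdk1 : dk ≤ 1) (hsk0 : 0 ≤ sk) (hskS : sk ≤ S) :
    |dk * (1 + sk) / (d0 * (1 + s0) + d1 * (1 + s1) + d2 * (1 + s2)) - dk| ≤ S := by
  set D := d0 * (1 + s0) + d1 * (1 + s1) + d2 * (1 + s2) with hD
  have hD1 : 1 ≤ D := by nlinarith [mul_nonneg hd0 hs0, mul_nonneg hd1 hs1, mul_nonneg hd2 hs2]
  have hDpos : 0 < D := by linarith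
  have heq : dk * (1 + sk) / D - dk = (dk * (sk - (d0*s0 + d1*s1 + d2*s2))) / D := by
    rw [eq_div_iff (ne_of_gt hDpos), sub_mul, div_mul_cancel₀ _ (ne_of_gt hDpos), hD]
    linear_combination (-dk) * hsum
  rw [heq, abs_div, abs_of_pos hDpos]
  have hin : |sk - (d0*s0 + d1*s1 + d2*s2)| ≤ S := by
    rw [abs_le]
    constructor <;>
      nlinarith [mul_nonneg hd0 hs0, mul_nonneg hd1 hs1, mul_nonneg hd2 hs2,
        mul_le_mul_of_nonneg_left hS0 hd0, mul_le_mul_of_nonneg_left hS1 hd1,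
        mul_le_mul_of_nonneg_left hS2 hd2]
  have hnum : |dk * (sk - (d0*s0 + d1*s1 + d2*s2))| ≤ S := by
    rw [abs_mul, abs_of_nonneg hdk]
    calc dk * |sk - (d0*s0 + d1*s1 + d2*s2)| ≤ 1 * S :=
          mul_le_mul hdk1 hin (abs_nonneg _) zero_le_one
    _ = S := one_mul S
  calc |dk * (sk - (d0*s0 + d1*s1 + d2*s2))| / D ≤ |dk * (sk - (d0*s0 + d1*s1 + d2*s2))| :=
        div_le_self (abs_nonneg _) hD1
  _ ≤ S := hnum

lemma key_algebra (g0 g1 g2 g3 g4 g5 w0 w1 w2 v0 v1 v2 h df : ℝ)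
    (hw : w0 + w1 + w2 = 1) (hv : v0 + v1 + v2 = 1) (hh : h ≠ 0) :
    (1/h) * ((w0 * ((2*g1 - 7*g2 + 11*g3)/6) + w1 * ((-g2 + 5*g3 + 2*g4)/6)
          + w2 * ((2*g3 + 5*g4 - g5)/6))
      - (v0 * ((2*g0 - 7*g1 + 11*g2)/6) + v1 * ((-g1 + 5*g2 + 2*g3)/6)
          + v2 * ((2*g2 + 5*g3 - g4)/6))) - df
    = ((-2*g0 + 15*g1 - 60*g2 + 20*g3 + 30*g4 - 3*g5) - 60*h*df)/(60*h)
      + ((w0 - 1/10) * ((2*g1 - 7*g2 + 11*g3)/6 - (-g2 + 5*g3 + 2*g4)/6)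
        + (w2 - 3/10) * ((2*g3 + 5*g4 - g5)/6 - (-g2 + 5*g3 + 2*g4)/6)) / h
      + (-((v0 - 1/10) * ((2*g0 - 7*g1 + 11*g2)/6 - (-g1 + 5*g2 + 2*g3)/6)
        + (v2 - 3/10) * ((2*g2 + 5*g3 - g4)/6 - (-g1 + 5*g2 + 2*g3)/6))) / h := by
  rw [show w1 = 1 - w0 - w2 by linarith, show v1 = 1 - v0 - v2 by linarith]
  field_simp
  ring

lemma betaLOC_nonneg (f : ℝ → ℝ) (y h : ℝ) (k : Fin 3) : 0 ≤ betaLOC f y h k := by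
  fin_cases k <;> simp [betaLOC] <;> positivity

lemma zetaUD_nonneg (f : ℝ → ℝ) (y h : ℝ) : 0 ≤ zetaUD f y h := abs_nonneg _

lemma weight_dev (f : ℝ → ℝ) (m y h : ℝ) (hh : 0 < h) (k : Fin 3) :
    |wenoUD5weight f m y h k - dlin k| ≤ (zetaUD f y h / h ^ m)^2 := by
  have he : 0 < h ^ m := Real.rpow_pos_of_pos hh m
  have hb : ∀ j : Fin 3, 0 ≤ betaLOC f y h j := betaLOC_nonneg f y h
  have hsq : ∀ j : Fin 3, (zetaUD f y h / (betaLOC f y h j + h^m))^2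
      ≤ (zetaUD f y h / h^m)^2 := by
    intro j
    rw [div_pow, div_pow]
    have h1 : (0:ℝ) < (h^m)^2 := by positivity
    have h2 : (h^m)^2 ≤ (betaLOC f y h j + h^m)^2 := by nlinarith [hb j]
    exact div_le_div_of_nonneg_left (sq_nonneg _) h1 h2
  have hnn : ∀ j : Fin 3, 0 ≤ (zetaUD f y h / (betaLOC f y h j + h^m))^2 := fun j => sq_nonneg _
  simp only [wenoUD5weight, Fin.sum_univ_three]
  fin_cases k <;>
    simp only [dlin, Matrix.cons_val_zero, Matrix.cons_val_one, Matrix.head_cons,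
      Matrix.cons_val_two, Matrix.tail_cons] <;>
    exact wdev _ _ _ _ _ _ _ _ _ (by norm_num) (by norm_num) (by norm_num) (by norm_num)
      (hnn 0) (hnn 1) (hnn 2) (hsq 0) (hsq 1) (hsq 2) (by norm_num) (by norm_num) (hnn _) (hsq _)

lemma weight_sum (f : ℝ → ℝ) (m y h : ℝ) (hh : 0 < h) :
    wenoUD5weight f m y h 0 + wenoUD5weight f m y h 1 + wenoUD5weight f m y h 2 = 1 := by
  have he : 0 < h ^ m := Real.rpow_pos_of_pos hh m
  have hb : ∀ j : Fin 3, 0 ≤ betaLOC f y h j := betaLOC_nonneg f y h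
  have hD : (1:ℝ) ≤ ∑ l : Fin 3, dlin l * (1 + (zetaUD f y h / (betaLOC f y h l + h ^ m))^2) := by
    rw [Fin.sum_univ_three]
    simp only [dlin, Matrix.cons_val_zero, Matrix.cons_val_one, Matrix.head_cons,
      Matrix.cons_val_two, Matrix.tail_cons]
    nlinarith [sq_nonneg (zetaUD f y h / (betaLOC f y h 0 + h ^ m)),
      sq_nonneg (zetaUD f y h / (betaLOC f y h 1 + h ^ m)),
      sq_nonneg (zetaUD f y h / (betaLOC f y h 2 + h ^ m))]
  have hDne : (∑ l : Fin 3, dlin l * (1 + (zetaUD f y h / (betaLOC f y h l + h ^ m))^2)) ≠ 0 := by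
    linarith
  simp only [wenoUD5weight]
  rw [← add_div, ← add_div, ← Fin.sum_univ_three
    (fun k => dlin k * (1 + (zetaUD f y h / (betaLOC f y h k + h ^ m))^2)), div_self hDne]

set_option maxHeartbeats 2000000 in
/-- Consistency/accuracy of the WENO-UD5 scheme with `ε = h^m`, `p = 2`,
`0 < m ≤ 9/2`: the conservative derivative approximation is fifth-order
accurate as `h → 0⁺`, allowing an arbitrary number of vanishing derivatives
of `f`. -/
theorem wenoUD5_fifth_order_accuracy (f : ℝ → ℝ) (hf : ContDiff ℝ (⊤ : ℕ∞) f) (x : ℝ)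
    (m : ℝ) (hm0 : 0 < m) (hm : m ≤ 9 / 2) :
    (fun h : ℝ =>
        (1/h) * ((∑ k : Fin 3, wenoUD5weight f m x h k * candidateFlux f x h k)
          - (∑ k : Fin 3, wenoUD5weight f m (x - h) h k * candidateFlux f (x - h) h k))
        - deriv f x)
      =O[𝓝[>] (0:ℝ)] fun h => h ^ 5 := by
  have hf' : ContDiff ℝ ∞ f := hf.of_le (by simp)
  have s1x : (fun h : ℝ => f (x - 2*h) - 3*f (x - h) + 3*f x - f (x + h)) =O[𝓝 (0:ℝ)] fun h => h ^ 3 := by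
    have hs := stencil_null_isBigO f hf' x 3 4 ![1,-3,3,-1] ![-2,-1,0,1] (by
      intro j hj
      interval_cases j <;> simp [Fin.sum_univ_four] <;> norm_num)
    refine hs.congr' ?_ (EventuallyEq.refl _ _)
    filter_upwards with h
    simp only [Fin.sum_univ_four, Matrix.cons_val_zero, Matrix.cons_val_one, Matrix.head_cons,
      Matrix.cons_val_two, Matrix.tail_cons, Matrix.cons_val_three, Matrix.cons_val_four]
    rw [show x + (-2:ℝ)*h = x - 2*h by ring, show x + (-1:ℝ)*h = x - h by ring, show x + (0:ℝ)*h = x by ring, show x + (1:ℝ)*h = x + h by ring]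
    ring
  have s2x : (fun h : ℝ => -f (x - h) + 3*f x - 3*f (x + h) + f (x + 2*h)) =O[𝓝 (0:ℝ)] fun h => h ^ 3 := by
    have hs := stencil_null_isBigO f hf' x 3 4 ![-1,3,-3,1] ![-1,0,1,2] (by
      intro j hj
      interval_cases j <;> simp [Fin.sum_univ_four] <;> norm_num)
    refine hs.congr' ?_ (EventuallyEq.refl _ _)
    filter_upwards with h
    simp only [Fin.sum_univ_four, Matrix.cons_val_zero, Matrix.cons_val_one, Matrix.head_cons,
      Matrix.cons_val_two, Matrix.tail_cons, Matrix.cons_val_three, Matrix.cons_val_four]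
    rw [show x + (-1:ℝ)*h = x - h by ring, show x + (0:ℝ)*h = x by ring, show x + (1:ℝ)*h = x + h by ring, show x + (2:ℝ)*h = x + 2*h by ring]
    ring
  have s3x : (fun h : ℝ => f (x - h) - 2*f x + f (x + h)) =O[𝓝 (0:ℝ)] fun h => h ^ 2 := by
    have hs := stencil_null_isBigO f hf' x 2 3 ![1,-2,1] ![-1,0,1] (by
      intro j hj
      interval_cases j <;> simp [Fin.sum_univ_three] <;> norm_num)
    refine hs.congr' ?_ (EventuallyEq.refl _ _)
    filter_upwards with h
    simp only [Fin.sum_univ_three, Matrix.cons_val_zero, Matrix.cons_val_one, Matrix.head_cons,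
      Matrix.cons_val_two, Matrix.tail_cons, Matrix.cons_val_three, Matrix.cons_val_four]
    rw [show x + (-1:ℝ)*h = x - h by ring, show x + (0:ℝ)*h = x by ring, show x + (1:ℝ)*h = x + h by ring]
    ring
  have s4x : (fun h : ℝ => f (x - 2*h) - 4*f (x - h) + 6*f x - 4*f (x + h) + f (x + 2*h)) =O[𝓝 (0:ℝ)] fun h => h ^ 4 := by
    have hs := stencil_null_isBigO f hf' x 4 5 ![1,-4,6,-4,1] ![-2,-1,0,1,2] (by
      intro j hj
      interval_cases j <;> simp [Fin.sum_univ_five] <;> norm_num)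
    refine hs.congr' ?_ (EventuallyEq.refl _ _)
    filter_upwards with h
    simp only [Fin.sum_univ_five, Matrix.cons_val_zero, Matrix.cons_val_one, Matrix.head_cons,
      Matrix.cons_val_two, Matrix.tail_cons, Matrix.cons_val_three, Matrix.cons_val_four]
    rw [show x + (-2:ℝ)*h = x - 2*h by ring, show x + (-1:ℝ)*h = x - h by ring, show x + (0:ℝ)*h = x by ring, show x + (1:ℝ)*h = x + h by ring, show x + (2:ℝ)*h = x + 2*h by ring]
    ring
  have s1y : (fun h : ℝ => f (x - 3*h) - 3*f (x - 2*h) + 3*f (x - h) - f x) =O[𝓝 (0:ℝ)] fun h => h ^ 3 := by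
    have hs := stencil_null_isBigO f hf' x 3 4 ![1,-3,3,-1] ![-3,-2,-1,0] (by
      intro j hj
      interval_cases j <;> simp [Fin.sum_univ_four] <;> norm_num)
    refine hs.congr' ?_ (EventuallyEq.refl _ _)
    filter_upwards with h
    simp only [Fin.sum_univ_four, Matrix.cons_val_zero, Matrix.cons_val_one, Matrix.head_cons,
      Matrix.cons_val_two, Matrix.tail_cons, Matrix.cons_val_three, Matrix.cons_val_four]
    rw [show x + (-3:ℝ)*h = x - 3*h by ring, show x + (-2:ℝ)*h = x - 2*h by ring, show x + (-1:ℝ)*h = x - h by ring, show x + (0:ℝ)*h = x by ring]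
    ring
  have s2y : (fun h : ℝ => -f (x - 2*h) + 3*f (x - h) - 3*f x + f (x + h)) =O[𝓝 (0:ℝ)] fun h => h ^ 3 := by
    have hs := stencil_null_isBigO f hf' x 3 4 ![-1,3,-3,1] ![-2,-1,0,1] (by
      intro j hj
      interval_cases j <;> simp [Fin.sum_univ_four] <;> norm_num)
    refine hs.congr' ?_ (EventuallyEq.refl _ _)
    filter_upwards with h
    simp only [Fin.sum_univ_four, Matrix.cons_val_zero, Matrix.cons_val_one, Matrix.head_cons,
      Matrix.cons_val_two, Matrix.tail_cons, Matrix.cons_val_three, Matrix.cons_val_four]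
    rw [show x + (-2:ℝ)*h = x - 2*h by ring, show x + (-1:ℝ)*h = x - h by ring, show x + (0:ℝ)*h = x by ring, show x + (1:ℝ)*h = x + h by ring]
    ring
  have s3y : (fun h : ℝ => f (x - 2*h) - 2*f (x - h) + f x) =O[𝓝 (0:ℝ)] fun h => h ^ 2 := by
    have hs := stencil_null_isBigO f hf' x 2 3 ![1,-2,1] ![-2,-1,0] (by
      intro j hj
      interval_cases j <;> simp [Fin.sum_univ_three] <;> norm_num)
    refine hs.congr' ?_ (EventuallyEq.refl _ _)
    filter_upwards with h
    simp only [Fin.sum_univ_three, Matrix.cons_val_zero, Matrix.cons_val_one, Matrix.head_cons,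
      Matrix.cons_val_two, Matrix.tail_cons, Matrix.cons_val_three, Matrix.cons_val_four]
    rw [show x + (-2:ℝ)*h = x - 2*h by ring, show x + (-1:ℝ)*h = x - h by ring, show x + (0:ℝ)*h = x by ring]
    ring
  have s4y : (fun h : ℝ => f (x - 3*h) - 4*f (x - 2*h) + 6*f (x - h) - 4*f x + f (x + h)) =O[𝓝 (0:ℝ)] fun h => h ^ 4 := by
    have hs := stencil_null_isBigO f hf' x 4 5 ![1,-4,6,-4,1] ![-3,-2,-1,0,1] (by
      intro j hj
      interval_cases j <;> simp [Fin.sum_univ_five] <;> norm_num)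
    refine hs.congr' ?_ (EventuallyEq.refl _ _)
    filter_upwards with h
    simp only [Fin.sum_univ_five, Matrix.cons_val_zero, Matrix.cons_val_one, Matrix.head_cons,
      Matrix.cons_val_two, Matrix.tail_cons, Matrix.cons_val_three, Matrix.cons_val_four]
    rw [show x + (-3:ℝ)*h = x - 3*h by ring, show x + (-2:ℝ)*h = x - 2*h by ring, show x + (-1:ℝ)*h = x - h by ring, show x + (0:ℝ)*h = x by ring, show x + (1:ℝ)*h = x + h by ring]
    ring
  have d0x : (fun h : ℝ => (2 * f (x - 2*h) - 7 * f (x - h) + 11 * f x) / 6 - (-f (x - h) + 5 * f x + 2 * f (x + h)) / 6) =O[𝓝 (0:ℝ)] fun h => h ^ 3 := by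
    have hs := stencil_null_isBigO f hf' x 3 4 ![1/3,-1,1,-1/3] ![-2,-1,0,1] (by
      intro j hj
      interval_cases j <;> simp [Fin.sum_univ_four] <;> norm_num)
    refine hs.congr' ?_ (EventuallyEq.refl _ _)
    filter_upwards with h
    simp only [Fin.sum_univ_four, Matrix.cons_val_zero, Matrix.cons_val_one, Matrix.head_cons,
      Matrix.cons_val_two, Matrix.tail_cons, Matrix.cons_val_three, Matrix.cons_val_four]
    rw [show x + (-2:ℝ)*h = x - 2*h by ring, show x + (-1:ℝ)*h = x - h by ring, show x + (0:ℝ)*h = x by ring, show x + (1:ℝ)*h = x + h by ring]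
    ring
  have d2x : (fun h : ℝ => (2 * f x + 5 * f (x + h) - f (x + 2*h)) / 6 - (-f (x - h) + 5 * f x + 2 * f (x + h)) / 6) =O[𝓝 (0:ℝ)] fun h => h ^ 3 := by
    have hs := stencil_null_isBigO f hf' x 3 4 ![1/6,-1/2,1/2,-1/6] ![-1,0,1,2] (by
      intro j hj
      interval_cases j <;> simp [Fin.sum_univ_four] <;> norm_num)
    refine hs.congr' ?_ (EventuallyEq.refl _ _)
    filter_upwards with h
    simp only [Fin.sum_univ_four, Matrix.cons_val_zero, Matrix.cons_val_one, Matrix.head_cons,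
      Matrix.cons_val_two, Matrix.tail_cons, Matrix.cons_val_three, Matrix.cons_val_four]
    rw [show x + (-1:ℝ)*h = x - h by ring, show x + (0:ℝ)*h = x by ring, show x + (1:ℝ)*h = x + h by ring, show x + (2:ℝ)*h = x + 2*h by ring]
    ring
  have d0y : (fun h : ℝ => (2 * f (x - 3*h) - 7 * f (x - 2*h) + 11 * f (x - h)) / 6 - (-f (x - 2*h) + 5 * f (x - h) + 2 * f x) / 6) =O[𝓝 (0:ℝ)] fun h => h ^ 3 := by
    have hs := stencil_null_isBigO f hf' x 3 4 ![1/3,-1,1,-1/3] ![-3,-2,-1,0] (by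
      intro j hj
      interval_cases j <;> simp [Fin.sum_univ_four] <;> norm_num)
    refine hs.congr' ?_ (EventuallyEq.refl _ _)
    filter_upwards with h
    simp only [Fin.sum_univ_four, Matrix.cons_val_zero, Matrix.cons_val_one, Matrix.head_cons,
      Matrix.cons_val_two, Matrix.tail_cons, Matrix.cons_val_three, Matrix.cons_val_four]
    rw [show x + (-3:ℝ)*h = x - 3*h by ring, show x + (-2:ℝ)*h = x - 2*h by ring, show x + (-1:ℝ)*h = x - h by ring, show x + (0:ℝ)*h = x by ring]
    ring
  have d2y : (fun h : ℝ => (2 * f (x - h) + 5 * f x - f (x + h)) / 6 - (-f (x - 2*h) + 5 * f (x - h) + 2 * f x) / 6) =O[𝓝 (0:ℝ)] fun h => h ^ 3 := by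
    have hs := stencil_null_isBigO f hf' x 3 4 ![1/6,-1/2,1/2,-1/6] ![-2,-1,0,1] (by
      intro j hj
      interval_cases j <;> simp [Fin.sum_univ_four] <;> norm_num)
    refine hs.congr' ?_ (EventuallyEq.refl _ _)
    filter_upwards with h
    simp only [Fin.sum_univ_four, Matrix.cons_val_zero, Matrix.cons_val_one, Matrix.head_cons,
      Matrix.cons_val_two, Matrix.tail_cons, Matrix.cons_val_three, Matrix.cons_val_four]
    rw [show x + (-2:ℝ)*h = x - 2*h by ring, show x + (-1:ℝ)*h = x - h by ring, show x + (0:ℝ)*h = x by ring, show x + (1:ℝ)*h = x + h by ring]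
    ring
  have hqx : (fun h : ℝ => (f (x - 2*h) - 3*f (x - h) + 3*f x - f (x + h))^2 + (-f (x - h) + 3*f x - 3*f (x + h) + f (x + 2*h))^2 + 2*((f (x - h) - 2*f x + f (x + h))*(f (x - 2*h) - 4*f (x - h) + 6*f x - 4*f (x + h) + f (x + 2*h))))
      =O[𝓝 (0:ℝ)] fun h => h ^ 6 := by
    have e1 : (fun h : ℝ => (f (x - 2*h) - 3*f (x - h) + 3*f x - f (x + h))^2) =O[𝓝 (0:ℝ)] fun h => h ^ 6 :=
      (s1x.mul s1x).congr (fun h => by ring) (fun h => by ring)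
    have e2 : (fun h : ℝ => (-f (x - h) + 3*f x - 3*f (x + h) + f (x + 2*h))^2) =O[𝓝 (0:ℝ)] fun h => h ^ 6 :=
      (s2x.mul s2x).congr (fun h => by ring) (fun h => by ring)
    have e3 : (fun h : ℝ => 2*((f (x - h) - 2*f x + f (x + h))*(f (x - 2*h) - 4*f (x - h) + 6*f x - 4*f (x + h) + f (x + 2*h)))) =O[𝓝 (0:ℝ)] fun h => h ^ 6 :=
      ((s3x.mul s4x).const_mul_left 2).congr (fun h => by ring) (fun h => by ring)
    exact (e1.add e2).add e3
  have hqy : (fun h : ℝ => (f (x - 3*h) - 3*f (x - 2*h) + 3*f (x - h) - f x)^2 + (-f (x - 2*h) + 3*f (x - h) - 3*f x + f (x + h))^2 + 2*((f (x - 2*h) - 2*f (x - h) + f x)*(f (x - 3*h) - 4*f (x - 2*h) + 6*f (x - h) - 4*f x + f (x + h))))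
      =O[𝓝 (0:ℝ)] fun h => h ^ 6 := by
    have e1 : (fun h : ℝ => (f (x - 3*h) - 3*f (x - 2*h) + 3*f (x - h) - f x)^2) =O[𝓝 (0:ℝ)] fun h => h ^ 6 :=
      (s1y.mul s1y).congr (fun h => by ring) (fun h => by ring)
    have e2 : (fun h : ℝ => (-f (x - 2*h) + 3*f (x - h) - 3*f x + f (x + h))^2) =O[𝓝 (0:ℝ)] fun h => h ^ 6 :=
      (s2y.mul s2y).congr (fun h => by ring) (fun h => by ring)
    have e3 : (fun h : ℝ => 2*((f (x - 2*h) - 2*f (x - h) + f x)*(f (x - 3*h) - 4*f (x - 2*h) + 6*f (x - h) - 4*f x + f (x + h)))) =O[𝓝 (0:ℝ)] fun h => h ^ 6 :=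
      ((s3y.mul s4y).const_mul_left 2).congr (fun h => by ring) (fun h => by ring)
    exact (e1.add e2).add e3
  have hN : (fun h : ℝ => (-2*f (x - 3*h) + 15*f (x - 2*h) - 60*f (x - h) + 20*f x + 30*f (x + h) - 3*f (x + 2*h)) - 60*h*deriv f x) =O[𝓝 (0:ℝ)] fun h => h ^ 6 := by
    have hs := stencil_expand_isBigO f hf' x 6 6 ![-2,15,-60,20,30,-3] ![-3,-2,-1,0,1,2]
    refine hs.congr' ?_ (EventuallyEq.refl _ _)
    filter_upwards with h
    have hpoly : ∑ j ∈ Finset.range 6,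
        (∑ i : Fin 6, (![-2,15,-60,20,30,-3] : Fin 6 → ℝ) i * (![-3,-2,-1,0,1,2] : Fin 6 → ℝ) i ^ j)
          * (iteratedDeriv j f x / (j.factorial : ℝ)) * h ^ j = 60*h*deriv f x := by
      rw [Finset.sum_range_succ, Finset.sum_range_succ, Finset.sum_range_succ,
        Finset.sum_range_succ, Finset.sum_range_succ, Finset.sum_range_succ,
        Finset.sum_range_zero]
      norm_num [Fin.sum_univ_six, iteratedDeriv_one,
        show ((![-2,15,-60,20,30,-3] : Fin 6 → ℝ) 2 = -60) from rfl,
        show ((![-3,-2,-1,0,1,2] : Fin 6 → ℝ) 2 = -1) from rfl,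
        show ((![-2,15,-60,20,30,-3] : Fin 6 → ℝ) 3 = 20) from rfl,
        show ((![-3,-2,-1,0,1,2] : Fin 6 → ℝ) 3 = 0) from rfl,
        show ((![-2,15,-60,20,30,-3] : Fin 6 → ℝ) 4 = 30) from rfl,
        show ((![-3,-2,-1,0,1,2] : Fin 6 → ℝ) 4 = 1) from rfl,
        show ((![-2,15,-60,20,30,-3] : Fin 6 → ℝ) 5 = -3) from rfl,
        show ((![-3,-2,-1,0,1,2] : Fin 6 → ℝ) 5 = 2) from rfl]
      ring
    rw [hpoly]
    congr 1
    simp only [Fin.sum_univ_six, Matrix.cons_val_zero, Matrix.cons_val_one, Matrix.head_cons,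
      Matrix.cons_val_two, Matrix.tail_cons, Matrix.cons_val_three, Matrix.cons_val_four,
      show ((![-2,15,-60,20,30,-3] : Fin 6 → ℝ) 5 = -3) from rfl,
      show ((![-3,-2,-1,0,1,2] : Fin 6 → ℝ) 5 = 2) from rfl]
    rw [show x + (-3:ℝ)*h = x - 3*h by ring, show x + (-2:ℝ)*h = x - 2*h by ring,
      show x + (-1:ℝ)*h = x - h by ring, show x + (0:ℝ)*h = x by ring,
      show x + (1:ℝ)*h = x + h by ring, show x + (2:ℝ)*h = x + 2*h by ring]
    ring
  obtain ⟨Ca, hCa0, hCa⟩ := ev_bound hqx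
  obtain ⟨Cb, hCb0, hCb⟩ := ev_bound hqy
  obtain ⟨C0x, hC0x0, h0x⟩ := ev_bound d0x
  obtain ⟨C2x, hC2x0, h2x⟩ := ev_bound d2x
  obtain ⟨C0y, hC0y0, h0y⟩ := ev_bound d0y
  obtain ⟨C2y, hC2y0, h2y⟩ := ev_bound d2y
  obtain ⟨CN, hCN0, hNb⟩ := ev_bound hN
  have hzx : ∀ᶠ h in 𝓝[>] (0:ℝ), zetaUD f x h ≤ Ca * h ^ 6 := by
    filter_upwards [hCa] with h hb
    have hzeq : zetaUD f x h = |(f (x - 2*h) - 3*f (x - h) + 3*f x - f (x + h))^2 + (-f (x - h) + 3*f x - 3*f (x + h) + f (x + 2*h))^2 + 2*((f (x - h) - 2*f x + f (x + h))*(f (x - 2*h) - 4*f (x - h) + 6*f x - 4*f (x + h) + f (x + 2*h)))| := by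
      simp only [zetaUD]
      congr 1
      ring
    rw [hzeq]
    exact hb
  have hzy : ∀ᶠ h in 𝓝[>] (0:ℝ), zetaUD f (x - h) h ≤ Cb * h ^ 6 := by
    filter_upwards [hCb] with h hb
    have hzeq : zetaUD f (x - h) h = |(f (x - 3*h) - 3*f (x - 2*h) + 3*f (x - h) - f x)^2 + (-f (x - 2*h) + 3*f (x - h) - 3*f x + f (x + h))^2 + 2*((f (x - 2*h) - 2*f (x - h) + f x)*(f (x - 3*h) - 4*f (x - 2*h) + 6*f (x - h) - 4*f x + f (x + h)))| := by
      simp only [zetaUD]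
      rw [show x - h - 2*h = x - 3*h by ring, show x - h - h = x - 2*h by ring,
        show x - h + h = x by ring, show x - h + 2*h = x + h by ring]
      congr 1
      ring
    rw [hzeq]
    exact hb
  have hsmall : ∀ᶠ h : ℝ in 𝓝[>] (0:ℝ), 0 < h ∧ h ≤ 1 := by
    filter_upwards [Ioo_mem_nhdsGT_of_mem (Set.left_mem_Ico.mpr zero_lt_one)] with h hh
    exact ⟨hh.1, le_of_lt hh.2⟩
  have hT1 : (fun h : ℝ => ((-2*f (x - 3*h) + 15*f (x - 2*h) - 60*f (x - h) + 20*f x + 30*f (x + h) - 3*f (x + 2*h)) - 60*h*deriv f x)/(60*h)) =O[𝓝[>] (0:ℝ)] fun h => h ^ 5 := by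
    rw [isBigO_iff]
    refine ⟨CN/60, ?_⟩
    filter_upwards [hNb, hsmall] with h hb hh
    obtain ⟨hh0, hh1⟩ := hh
    rw [Real.norm_eq_abs, Real.norm_eq_abs, abs_div, abs_of_pos (by positivity : (0:ℝ) < 60*h),
      abs_of_pos (pow_pos hh0 5), div_le_iff₀ (by positivity : (0:ℝ) < 60*h)]
    calc |(-2*f (x - 3*h) + 15*f (x - 2*h) - 60*f (x - h) + 20*f x + 30*f (x + h) - 3*f (x + 2*h)) - 60*h*deriv f x| ≤ CN * h ^ 6 := hb
    _ = CN/60 * h ^ 5 * (60*h) := by ring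
  have hT2 : (fun h : ℝ => ((wenoUD5weight f m x h 0 - 1/10) * ((2*f (x - 2*h) - 7*f (x - h) + 11*f x)/6 - (-f (x - h) + 5*f x + 2*f (x + h))/6) + (wenoUD5weight f m x h 2 - 3/10) * ((2*f x + 5*f (x + h) - f (x + 2*h))/6 - (-f (x - h) + 5*f x + 2*f (x + h))/6)) / h) =O[𝓝[>] (0:ℝ)] fun h => h ^ 5 := by
    rw [isBigO_iff]
    refine ⟨Ca^2*(C0x + C2x), ?_⟩
    filter_upwards [hzx, h0x, h2x, hsmall] with h hz hb0 hb2 hh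
    obtain ⟨hh0, hh1⟩ := hh
    have he : 0 < h ^ m := Real.rpow_pos_of_pos hh0 m
    have hz0 : 0 ≤ zetaUD f x h := zetaUD_nonneg f x h
    have hw0 : |wenoUD5weight f m x h 0 - 1/10| ≤ (zetaUD f x h / h ^ m)^2 := by
      simpa [dlin] using weight_dev f m x h hh0 0
    have hw2 : |wenoUD5weight f m x h 2 - 3/10| ≤ (zetaUD f x h / h ^ m)^2 := by
      simpa [dlin] using weight_dev f m x h hh0 2
    have hS0 : (0:ℝ) ≤ (zetaUD f x h / h ^ m)^2 := sq_nonneg _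
    have hSb : (zetaUD f x h / h ^ m)^2 ≤ Ca^2 * (h ^ 6)^2 / (h ^ m)^2 := by
      have hzz : (zetaUD f x h)^2 ≤ Ca^2 * (h ^ 6)^2 := by nlinarith
      have hden : (0:ℝ) < (h ^ m)^2 := pow_pos he 2
      rw [div_pow, div_le_div_iff₀ hden hden]
      exact mul_le_mul_of_nonneg_right hzz hden.le
    rw [Real.norm_eq_abs, Real.norm_eq_abs, abs_div, abs_of_pos hh0,
      abs_of_pos (pow_pos hh0 5), div_le_iff₀ hh0]
    calc |(wenoUD5weight f m x h 0 - 1/10) * ((2*f (x - 2*h) - 7*f (x - h) + 11*f x)/6 - (-f (x - h) + 5*f x + 2*f (x + h))/6)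
          + (wenoUD5weight f m x h 2 - 3/10) * ((2*f x + 5*f (x + h) - f (x + 2*h))/6 - (-f (x - h) + 5*f x + 2*f (x + h))/6)|
        ≤ |(wenoUD5weight f m x h 0 - 1/10) * ((2*f (x - 2*h) - 7*f (x - h) + 11*f x)/6 - (-f (x - h) + 5*f x + 2*f (x + h))/6)|
          + |(wenoUD5weight f m x h 2 - 3/10) * ((2*f x + 5*f (x + h) - f (x + 2*h))/6 - (-f (x - h) + 5*f x + 2*f (x + h))/6)| := abs_add_le _ _
    _ ≤ (zetaUD f x h / h ^ m)^2 * (C0x * h ^ 3) + (zetaUD f x h / h ^ m)^2 * (C2x * h ^ 3) := by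
        rw [abs_mul, abs_mul]
        exact add_le_add (mul_le_mul hw0 hb0 (abs_nonneg _) hS0)
          (mul_le_mul hw2 hb2 (abs_nonneg _) hS0)
    _ = (zetaUD f x h / h ^ m)^2 * ((C0x + C2x) * h ^ 3) := by ring
    _ ≤ (Ca^2 * (h ^ 6)^2 / (h ^ m)^2) * ((C0x + C2x) * h ^ 3) :=
        mul_le_mul_of_nonneg_right hSb
          (mul_nonneg (add_nonneg hC0x0 hC2x0) (pow_pos hh0 3).le)
    _ = Ca^2 * (C0x + C2x) * ((h ^ 6)^2 / (h ^ m)^2 * h ^ 3) := by ring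
    _ ≤ Ca^2 * (C0x + C2x) * (h ^ 5 * h) := by
        refine mul_le_mul_of_nonneg_left ?_ (by positivity)
        have hpc := pow_chain hh0 hh1 hm
        calc (h ^ 6)^2 / (h ^ m)^2 * h ^ 3 = ((h ^ 6)^2 / (h ^ m)^2 * h ^ 3 / h) * h :=
              (div_mul_cancel₀ _ (ne_of_gt hh0)).symm
        _ ≤ h ^ 5 * h := mul_le_mul_of_nonneg_right hpc hh0.le
    _ = Ca^2 * (C0x + C2x) * h ^ 5 * h := by ring
  have hT3 : (fun h : ℝ => (-((wenoUD5weight f m (x - h) h 0 - 1/10) * ((2*f (x - 3*h) - 7*f (x - 2*h) + 11*f (x - h))/6 - (-f (x - 2*h) + 5*f (x - h) + 2*f x)/6) + (wenoUD5weight f m (x - h) h 2 - 3/10) * ((2*f (x - h) + 5*f x - f (x + h))/6 - (-f (x - 2*h) + 5*f (x - h) + 2*f x)/6))) / h) =O[𝓝[>] (0:ℝ)] fun h => h ^ 5 := by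
    rw [isBigO_iff]
    refine ⟨Cb^2*(C0y + C2y), ?_⟩
    filter_upwards [hzy, h0y, h2y, hsmall] with h hz hb0 hb2 hh
    obtain ⟨hh0, hh1⟩ := hh
    have he : 0 < h ^ m := Real.rpow_pos_of_pos hh0 m
    have hz0 : 0 ≤ zetaUD f (x - h) h := zetaUD_nonneg f (x - h) h
    have hw0 : |wenoUD5weight f m (x - h) h 0 - 1/10| ≤ (zetaUD f (x - h) h / h ^ m)^2 := by
      simpa [dlin] using weight_dev f m (x - h) h hh0 0
    have hw2 : |wenoUD5weight f m (x - h) h 2 - 3/10| ≤ (zetaUD f (x - h) h / h ^ m)^2 := by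
      simpa [dlin] using weight_dev f m (x - h) h hh0 2
    have hS0 : (0:ℝ) ≤ (zetaUD f (x - h) h / h ^ m)^2 := sq_nonneg _
    have hSb : (zetaUD f (x - h) h / h ^ m)^2 ≤ Cb^2 * (h ^ 6)^2 / (h ^ m)^2 := by
      have hzz : (zetaUD f (x - h) h)^2 ≤ Cb^2 * (h ^ 6)^2 := by nlinarith
      have hden : (0:ℝ) < (h ^ m)^2 := pow_pos he 2
      rw [div_pow, div_le_div_iff₀ hden hden]
      exact mul_le_mul_of_nonneg_right hzz hden.le
    rw [Real.norm_eq_abs, Real.norm_eq_abs, abs_div, abs_of_pos hh0,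
      abs_of_pos (pow_pos hh0 5), div_le_iff₀ hh0]
    rw [abs_neg]
    calc |(wenoUD5weight f m (x - h) h 0 - 1/10) * ((2*f (x - 3*h) - 7*f (x - 2*h) + 11*f (x - h))/6 - (-f (x - 2*h) + 5*f (x - h) + 2*f x)/6)
          + (wenoUD5weight f m (x - h) h 2 - 3/10) * ((2*f (x - h) + 5*f x - f (x + h))/6 - (-f (x - 2*h) + 5*f (x - h) + 2*f x)/6)|
        ≤ |(wenoUD5weight f m (x - h) h 0 - 1/10) * ((2*f (x - 3*h) - 7*f (x - 2*h) + 11*f (x - h))/6 - (-f (x - 2*h) + 5*f (x - h) + 2*f x)/6)|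
          + |(wenoUD5weight f m (x - h) h 2 - 3/10) * ((2*f (x - h) + 5*f x - f (x + h))/6 - (-f (x - 2*h) + 5*f (x - h) + 2*f x)/6)| := abs_add_le _ _
    _ ≤ (zetaUD f (x - h) h / h ^ m)^2 * (C0y * h ^ 3) + (zetaUD f (x - h) h / h ^ m)^2 * (C2y * h ^ 3) := by
        rw [abs_mul, abs_mul]
        exact add_le_add (mul_le_mul hw0 hb0 (abs_nonneg _) hS0)
          (mul_le_mul hw2 hb2 (abs_nonneg _) hS0)
    _ = (zetaUD f (x - h) h / h ^ m)^2 * ((C0y + C2y) * h ^ 3) := by ring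
    _ ≤ (Cb^2 * (h ^ 6)^2 / (h ^ m)^2) * ((C0y + C2y) * h ^ 3) :=
        mul_le_mul_of_nonneg_right hSb
          (mul_nonneg (add_nonneg hC0y0 hC2y0) (pow_pos hh0 3).le)
    _ = Cb^2 * (C0y + C2y) * ((h ^ 6)^2 / (h ^ m)^2 * h ^ 3) := by ring
    _ ≤ Cb^2 * (C0y + C2y) * (h ^ 5 * h) := by
        refine mul_le_mul_of_nonneg_left ?_ (by positivity)
        have hpc := pow_chain hh0 hh1 hm
        calc (h ^ 6)^2 / (h ^ m)^2 * h ^ 3 = ((h ^ 6)^2 / (h ^ m)^2 * h ^ 3 / h) * h :=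
              (div_mul_cancel₀ _ (ne_of_gt hh0)).symm
        _ ≤ h ^ 5 * h := mul_le_mul_of_nonneg_right hpc hh0.le
    _ = Cb^2 * (C0y + C2y) * h ^ 5 * h := by ring
  have heq : (fun h : ℝ =>
        (1/h) * ((∑ k : Fin 3, wenoUD5weight f m x h k * candidateFlux f x h k)
          - (∑ k : Fin 3, wenoUD5weight f m (x - h) h k * candidateFlux f (x - h) h k))
        - deriv f x)
      =ᶠ[𝓝[>] (0:ℝ)] fun h : ℝ => ((-2*f (x - 3*h) + 15*f (x - 2*h) - 60*f (x - h) + 20*f x + 30*f (x + h) - 3*f (x + 2*h)) - 60*h*deriv f x)/(60*h) + ((wenoUD5weight f m x h 0 - 1/10) * ((2*f (x - 2*h) - 7*f (x - h) + 11*f x)/6 - (-f (x - h) + 5*f x + 2*f (x + h))/6) + (wenoUD5weight f m x h 2 - 3/10) * ((2*f x + 5*f (x + h) - f (x + 2*h))/6 - (-f (x - h) + 5*f x + 2*f (x + h))/6)) / h + (-((wenoUD5weight f m (x - h) h 0 - 1/10) * ((2*f (x - 3*h) - 7*f (x - 2*h) + 11*f (x - h))/6 - (-f (x - 2*h) + 5*f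 (x - h) + 2*f x)/6) + (wenoUD5weight f m (x - h) h 2 - 3/10) * ((2*f (x - h) + 5*f x - f (x + h))/6 - (-f (x - 2*h) + 5*f (x - h) + 2*f x)/6))) / h := by
    filter_upwards [self_mem_nhdsWithin] with h hh0
    have hh0' : (0:ℝ) < h := hh0
    simp only [Fin.sum_univ_three, candidateFlux, Matrix.cons_val_zero, Matrix.cons_val_one,
      Matrix.head_cons, Matrix.cons_val_two, Matrix.tail_cons]
    rw [show x - h - 2*h = x - 3*h by ring, show x - h - h = x - 2*h by ring,
      show x - h + h = x by ring, show x - h + 2*h = x + h by ring]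
    exact key_algebra (f (x - 3*h)) (f (x - 2*h)) (f (x - h)) (f x) (f (x + h)) (f (x + 2*h))
      _ _ _ _ _ _ h (deriv f x) (weight_sum f m x h hh0') (weight_sum f m (x - h) h hh0')
      (ne_of_gt hh0')
  exact (((hT1.add hT2).add hT3).congr' heq.symm (EventuallyEq.refl _ _))
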